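/- arXiv:2406.19473 — 2 statements merged into one kernel-verified Lean document; each statement's English description precedes it below -/
import Mathlib

section
/- Let p be a prime and n ≥ 1 with p > n. Let γ(t) = (t, t²/2!, ..., t^n/n!) be the moment curve in Q_p^n. Then for all s, t in Z_p and every 1 ≤ k ≤ n-1, the p-adic absolute value of the determinant of the n×n matrix whose columns are γ'(t), ..., γ^{(k)}(t), γ'(s), ..., γ^{(n-k)}(s) equals |s - t|_p^{k(n-k)}. -/
/-!
Write `T(h)` for the lower unitriangular matrix with entries `h^(i-r)/(i-r)!`, i.e. `exp(h N)`
for the nilpotent shift `N`; its columns are `γ'(h), …, γ^{(n)}(h)`, and `T(t) T(h) = T(t + h)`.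
Factoring out `T(t)`, of determinant 1, replaces `(t, s)` by `(0, s - t)`: the first `k` columns
become unit vectors, leaving the minor `(h^(k+a-b)/(k+a-b)!)_{a,b < n-k}` with `h = s - t`.
Homogeneity pulls out `h^(k(n-k))`; multiplying row `a` of what remains by `(k+a)!` gives the
falling factorials `(k+a)(k+a-1)⋯(k+a-b+1)`, monic polynomials of degree `b` in `k+a`, hence a
Vandermonde determinant `∏_{i<j} (j - i)`. As `p > n`, every factorial and difference involved
is a `p`-adic unit.
-/

/-- The i-th coordinate (1-indexed via `i+1`) of the j-th derivative of the moment curve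
`γ(t) = (t/1!, ..., t^n/n!)` in `ℚ_p^n`:  `γ^{(j)}(t)_i = t^{i-j}/(i-j)!` if `i ≥ j`, else 0. -/
noncomputable def momentDeriv (p : ℕ) [Fact p.Prime] (n : ℕ) (j : ℕ) (t : ℚ_[p]) :
    Fin n → ℚ_[p] :=
  fun i => if j ≤ (i : ℕ) + 1 then t ^ ((i : ℕ) + 1 - j) / ((i : ℕ) + 1 - j).factorial else 0

open Finset Matrix

lemma det_of_pow_sub_mul {R ι : Type*} [CommRing R] [Fintype ι] [DecidableEq ι] (x : R)
    (f g : ι → ℕ) (E : Matrix ι ι R) (hE : ∀ a b, f a < g b → E a b = 0) :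
    (of fun a b => x ^ (f a - g b) * E a b).det = x ^ (∑ a, f a - ∑ b, g b) * E.det := by
  simp only [det_apply', of_apply, mul_sum]
  refine sum_congr rfl fun σ _ => ?_
  by_cases hσ : ∀ b, g b ≤ f (σ b)
  · rw [prod_mul_distrib, prod_pow_eq_pow_sum, sum_tsub_distrib _ fun b _ => hσ b,
      Equiv.sum_comp σ f]
    ring
  · obtain ⟨b, hb⟩ := not_forall.mp hσ
    rw [prod_eq_zero (mem_univ b) (by rw [hE _ _ (not_le.mp hb), mul_zero]),
      prod_eq_zero (f := fun i => E (σ i) i) (mem_univ b) (hE _ _ (not_le.mp hb))]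
    simp

lemma det_of_lt_ite_one {R : Type*} [CommRing R] {n k : ℕ} (hk : k ≤ n)
    (f : ℕ → ℕ → R) :
    (of fun i j : Fin n => if (j : ℕ) < k then (1 : Matrix (Fin n) (Fin n) R) i j
      else f i (j - k)).det = (of fun a b : Fin (n - k) => f (k + a) b).det := by
  let e : Fin k ⊕ Fin (n - k) ≃ Fin n := finSumFinEquiv.trans (finCongr (by omega))
  rw [← det_submatrix_equiv_self e, show (of _).submatrix e e =
      fromBlocks 1 (of fun (a : Fin k) (b : Fin (n - k)) => f a b) 0
        (of fun a b : Fin (n - k) => f (k + a) b) from ?_,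
    det_fromBlocks_zero₂₁, det_one, one_mul]
  ext (a | a) (b | b) <;> simp [e, one_apply, Fin.ext_iff]
  omega

section Taylor

variable {K : Type*} [Field K]

-- The `(i, r)` entry of `exp(h N)`, `N` the lower shift; `momentDeriv p n (r + 1) h i` for `i < n`.
def taylorCoeff (h : K) (i r : ℕ) : K :=
  if r ≤ i then h ^ (i - r) / (i - r).factorial else 0

def taylorMatrix (n : ℕ) (h : K) : Matrix (Fin n) (Fin n) K :=
  of fun i r => taylorCoeff h i r

def momentMatrix (n k : ℕ) (t s : K) : Matrix (Fin n) (Fin n) K :=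
  of fun i j => if (j : ℕ) < k then taylorCoeff t i j else taylorCoeff s i (j - k)

@[simp]
lemma taylorCoeff_self (h : K) (i : ℕ) : taylorCoeff h i i = 1 := by
  simp [taylorCoeff]

lemma taylorCoeff_of_lt (h : K) {i r : ℕ} (hir : i < r) : taylorCoeff h i r = 0 :=
  if_neg (by omega)

lemma taylorCoeff_zero (i r : ℕ) : taylorCoeff (0 : K) i r = if i = r then 1 else 0 := by
  rcases lt_trichotomy i r with hir | rfl | hri
  · simp [taylorCoeff_of_lt _ hir, hir.ne]
  · simp
  · simp [taylorCoeff, hri.le, hri.ne', zero_pow (Nat.sub_ne_zero_of_lt hri)]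

lemma taylorCoeff_eq_pow_mul (h : K) (i r : ℕ) :
    taylorCoeff h i r = h ^ (i - r) * taylorCoeff 1 i r := by
  unfold taylorCoeff
  split_ifs <;> simp [div_eq_mul_inv]

lemma det_taylorMatrix (n : ℕ) (h : K) : (taylorMatrix n h).det = 1 := by
  rw [det_of_isLowerTriangular (taylorMatrix n h) fun _ _ hir => taylorCoeff_of_lt h hir]
  simp [taylorMatrix]

lemma det_momentMatrix_zero_left {n k : ℕ} (hk : k ≤ n) (h : K) :
    (momentMatrix n k 0 h).det =
      h ^ (k * (n - k)) * (of fun a b : Fin (n - k) => taylorCoeff (1 : K) (k + a) b).det := by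
  have hcols : momentMatrix n k 0 h = of fun i j : Fin n =>
      if (j : ℕ) < k then (1 : Matrix (Fin n) (Fin n) K) i j else taylorCoeff h i (j - k) := by
    ext i j
    simp [momentMatrix, taylorCoeff_zero, one_apply, Fin.ext_iff]
  rw [hcols, det_of_lt_ite_one hk]
  simp only [taylorCoeff_eq_pow_mul h]
  rw [det_of_pow_sub_mul h (fun a : Fin (n - k) => k + a) (fun b => b) _
    fun _ _ hab => taylorCoeff_of_lt 1 hab]
  congr 2
  simp [sum_add_distrib, mul_comm]

variable [CharZero K]

lemma add_pow_div_factorial (x y : K) (N : ℕ) :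
    (x + y) ^ N / N.factorial =
      ∑ ij ∈ antidiagonal N, x ^ ij.1 / ij.1.factorial * (y ^ ij.2 / ij.2.factorial) := by
  rw [(Commute.all x y).add_pow', sum_div]
  refine sum_congr rfl fun ij hij => ?_
  have := (ij.1 + ij.2).factorial_ne_zero
  rw [← mem_antidiagonal.mp hij, nsmul_eq_mul, Nat.cast_add_choose]
  field_simp

lemma sum_taylorCoeff_mul (t h : K) {n i : ℕ} (hi : i < n) (c : ℕ) :
    ∑ r ∈ range n, taylorCoeff t i r * taylorCoeff h r c = taylorCoeff (t + h) i c := by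
  by_cases hci : c ≤ i
  · have hsupport : ∀ r ∈ range n, r ∉ Ico c (i + 1) →
        taylorCoeff t i r * taylorCoeff h r c = 0 := by
      intro r _ hr
      rcases lt_or_ge r c with hrc | hcr
      · rw [taylorCoeff_of_lt h hrc, mul_zero]
      · rw [taylorCoeff_of_lt t (by rw [mem_Ico] at hr; omega), zero_mul]
    rw [← sum_subset (fun r hr => mem_range.2 (by rw [mem_Ico] at hr; omega)) hsupport,
      sum_Ico_eq_sum_range, show i + 1 - c = i - c + 1 by omega, taylorCoeff, if_pos hci,
      add_comm t h, add_pow_div_factorial, Nat.sum_antidiagonal_eq_sum_range_succ_mk]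
    refine sum_congr rfl fun b hb => ?_
    have hb : b ≤ i - c := Nat.lt_succ_iff.mp (mem_range.mp hb)
    rw [mul_comm, taylorCoeff, if_pos (by omega), taylorCoeff, if_pos (by omega),
      show c + b - c = b by omega, show i - (c + b) = i - c - b by omega]
  · rw [taylorCoeff_of_lt _ (not_le.mp hci)]
    refine sum_eq_zero fun r _ => ?_
    rcases le_or_gt r i with hri | hir
    · rw [taylorCoeff_of_lt h (by omega), mul_zero]
    · rw [taylorCoeff_of_lt t hir, zero_mul]

lemma taylorMatrix_mul_momentMatrix (n k : ℕ) (t t' s' : K) :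
    taylorMatrix n t * momentMatrix n k t' s' = momentMatrix n k (t + t') (t + s') := by
  ext i j
  simp only [mul_apply, taylorMatrix, momentMatrix, of_apply]
  split_ifs <;>
    rw [← sum_taylorCoeff_mul _ _ i.isLt,
      ← Fin.sum_univ_eq_sum_range (fun r => taylorCoeff t i r * _)]

lemma momentMatrix_eq_taylorMatrix_mul (n k : ℕ) (t s : K) :
    momentMatrix n k t s = taylorMatrix n t * momentMatrix n k 0 (s - t) := by
  rw [taylorMatrix_mul_momentMatrix, add_zero, add_sub_cancel]

lemma det_taylorCoeff_one_mul_prod_factorial (k m : ℕ) :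
    (of fun a b : Fin m => taylorCoeff (1 : K) (k + a) b).det *
      ∏ a : Fin m, ((k + a).factorial : K) =
      ∏ i : Fin m, ∏ j ∈ Ioi i, (((j : ℕ) : K) - i) := by
  have hdesc : diagonal (fun a : Fin m => ((k + a).factorial : K)) *
      (of fun a b : Fin m => taylorCoeff (1 : K) (k + a) b) =
      of fun a b : Fin m => (descPochhammer K b).eval ((k + a : ℕ) : K) := by
    ext a b
    rw [diagonal_mul, of_apply, of_apply, descPochhammer_eval_eq_descFactorial, taylorCoeff]
    split_ifs with hb
    · have hne : ((k + a - b : ℕ).factorial : K) ≠ 0 :=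
        Nat.cast_ne_zero.2 (Nat.factorial_ne_zero _)
      rw [one_pow, ← Nat.factorial_mul_descFactorial hb, Nat.cast_mul, mul_one_div,
        mul_div_cancel_left₀ _ hne]
    · rw [mul_zero, Nat.descFactorial_eq_zero_iff_lt.mpr (by omega), Nat.cast_zero]
  rw [mul_comm, ← det_diagonal, ← det_mul, hdesc,
    ← det_eval_matrixOfPolynomials_eq_det_vandermonde _ _ (fun i => descPochhammer_natDegree K i)
      (fun i => monic_descPochhammer K i), det_vandermonde]
  simp

end Taylor

lemma norm_det_taylorCoeff_one {p : ℕ} [Fact p.Prime] {k m : ℕ} (hkm : k + m ≤ p) :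
    ‖(of fun a b : Fin m => taylorCoeff (1 : ℚ_[p]) (k + a) b).det‖ = 1 := by
  have h := congrArg norm (det_taylorCoeff_one_mul_prod_factorial (K := ℚ_[p]) k m)
  have hfact : ∀ a : Fin m, ‖((k + a).factorial : ℚ_[p])‖ = 1 := fun a =>
    Padic.norm_natCast_eq_one_iff.2 (Nat.Prime.coprime_factorial_of_lt Fact.out (by omega))
  have hdiff : ∀ i j : Fin m, i < j → ‖((j : ℕ) : ℚ_[p]) - i‖ = 1 := fun i j hij => by
    rw [← Nat.cast_sub hij.le, Padic.norm_natCast_eq_one_iff]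
    exact Nat.coprime_of_lt_prime (by omega) (by omega) Fact.out
  simpa [norm_prod, hfact,
    prod_eq_one fun i _ => prod_eq_one fun j hj => hdiff i j (mem_Ioi.1 hj)] using h

lemma momentMatrix_eq_momentDeriv (p : ℕ) [Fact p.Prime] (n k : ℕ) (t s : ℚ_[p]) :
    momentMatrix n k t s = of fun i j : Fin n =>
      if (j : ℕ) < k then momentDeriv p n ((j : ℕ) + 1) t i
      else momentDeriv p n ((j : ℕ) - k + 1) s i := by
  ext i j
  simp [momentMatrix, momentDeriv, taylorCoeff]

theorem padic_vandermonde_general (p n : ℕ) [Fact p.Prime] (hpn : n < p)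
    (k : ℕ) (hk2 : k ≤ n - 1) (s t : ℤ_[p]) :
    ‖(Matrix.of fun (i j : Fin n) =>
        if (j : ℕ) < k then momentDeriv p n ((j : ℕ) + 1) (t : ℚ_[p]) i
        else momentDeriv p n ((j : ℕ) - k + 1) (s : ℚ_[p]) i).det‖ =
      ‖(s : ℚ_[p]) - (t : ℚ_[p])‖ ^ (k * (n - k)) := by
  rw [← momentMatrix_eq_momentDeriv, momentMatrix_eq_taylorMatrix_mul, det_mul, det_taylorMatrix,
    one_mul, det_momentMatrix_zero_left (by omega), norm_mul, norm_pow,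
    norm_det_taylorCoeff_one (by omega), mul_one]

/-- p-adic Vandermonde identity.  For `p > n`, `1 ≤ k ≤ n-1`, `s, t ∈ ℤ_p`,
the determinant of the matrix with columns `γ'(t),...,γ^{(k)}(t),γ'(s),...,γ^{(n-k)}(s)`
has p-adic absolute value `|s - t|_p^{k(n-k)}`. -/
theorem padic_vandermonde (p n : ℕ) [Fact p.Prime] (hn : 1 ≤ n) (hpn : n < p)
    (k : ℕ) (hk1 : 1 ≤ k) (hk2 : k ≤ n - 1) (s t : ℤ_[p]) :
    ‖(Matrix.of fun (i j : Fin n) =>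
        if (j : ℕ) < k then momentDeriv p n ((j : ℕ) + 1) (t : ℚ_[p]) i
        else momentDeriv p n ((j : ℕ) - k + 1) (s : ℚ_[p]) i).det‖ =
      ‖(s : ℚ_[p]) - (t : ℚ_[p])‖ ^ (k * (n - k)) :=
  padic_vandermonde_general p n hpn k hk2 s t
end

section
/- p-adic Fourier slicing: let f be a Schwartz–Bruhat function on Q_p^n whose Fourier transform is supported in a set Ω ⊆ Q_p^n. Let H ⊆ Q_p^n be a k-dimensional linear subspace, B : Q_p^k → Q_p^n a linear isomorphism onto H, and z ∈ Q_p^n. Define f^z : Q_p^k → ℂ by f^z(y) = f(B(y) + z). Then the Fourier transform of f^z is supported in the set B^⊤[Ω] = {B^⊤ ξ : ξ ∈ Ω}. -/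
/-!
Write `g(y) = f(By + z)`. Because `f` is locally constant with compact support, Fourier inversion
holds exactly at a finite scale: `c · f(x) = ∫_{‖ξ‖ ≤ p^N} χ(x·ξ) f̂(ξ) dξ` with `c > 0`.
Substituting `x = By + z` into `ĝ(η)`, integrating `y` over a ball `‖y‖ ≤ p^R` containing the
support of `g` (compact, as `B` is injective) and exchanging the integrals expresses `c · ĝ(η)` as
an integral of `χ(z·ξ) f̂(ξ)` against the character sum `∫_{‖y‖ ≤ p^R} χ((Bᵀξ - η)·y) dy`, which
vanishes unless `‖Bᵀξ - η‖ ≤ p^(-R)`. If `η ∉ Bᵀ[Ω]`, then `η` lies at positive distance from the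
compact set `Bᵀ[supp f̂ ∩ {‖ξ‖ ≤ p^N}]`, so for large `R` every term vanishes.
-/

open MeasureTheory

noncomputable def padicFT {p : ℕ} [Fact p.Prime] {d : ℕ} [MeasurableSpace ℚ_[p]]
    (μ : Measure (Fin d → ℚ_[p])) (e : AddChar ℚ_[p] Circle)
    (f : (Fin d → ℚ_[p]) → ℂ) (ξ : Fin d → ℚ_[p]) : ℂ :=
  ∫ x, (e (-(∑ i, x i * ξ i)) : ℂ) * f x ∂μ

open Metric Function Filter
open scoped Matrix

section Ultrametric

variable {E : Type*} [SeminormedAddCommGroup E]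

theorem IsLocallyConstant.exists_pos_forall_norm_lt_add_eq {F : Type*} [Zero F] {f : E → F}
    (hf : IsLocallyConstant f) (hcs : HasCompactSupport f) :
    ∃ δ > 0, ∀ x v, ‖v‖ < δ → f (x + v) = f x := by
  obtain ⟨δ, hδ, hball⟩ := lebesgue_number_lemma_of_metric hcs (c := fun x => f ⁻¹' {f x})
    (fun x => hf.isOpen_fiber _) fun x _ => Set.mem_iUnion.2 ⟨x, rfl⟩
  have on_tsupport : ∀ x ∈ tsupport f, ∀ v, ‖v‖ < δ → f (x + v) = f x := by
    intro x hx v hv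
    obtain ⟨y, hy⟩ := hball x hx
    have hxv : x + v ∈ ball x δ := by simpa [mem_ball, dist_eq_norm] using hv
    exact (hy hxv).trans (hy (mem_ball_self hδ)).symm
  refine ⟨δ, hδ, fun x v hv => ?_⟩
  by_cases hx : x ∈ tsupport f
  · exact on_tsupport x hx v hv
  by_cases hxv : x + v ∈ tsupport f
  · simpa using (on_tsupport _ hxv (-v) (by simpa using hv)).symm
  · rw [image_eq_zero_of_notMem_tsupport hx, image_eq_zero_of_notMem_tsupport hxv]

theorem IsUltrametricDist.isLocallyConstant_of_forall_norm_le_add_eq [IsUltrametricDist E]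
    {F : Type*} {f : E → F} {ε : ℝ} (hε : 0 < ε) (hf : ∀ x v, ‖v‖ ≤ ε → f (x + v) = f x) :
    IsLocallyConstant f :=
  (IsLocallyConstant.iff_exists_open f).2 fun x => ⟨closedBall x ε,
    IsUltrametricDist.isOpen_closedBall x hε.ne', mem_closedBall_self hε.le, fun y hy => by
      simpa using hf x (y - x) (by rwa [← dist_eq_norm])⟩

theorem IsUltrametricDist.norm_dotProduct_le {ι R : Type*} [Fintype ι] [SeminormedRing R]
    [IsUltrametricDist R] (v w : ι → R) : ‖v ⬝ᵥ w‖ ≤ ‖v‖ * ‖w‖ :=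
  IsUltrametricDist.norm_sum_le_of_forall_le_of_nonneg (by positivity) fun i _ =>
    (norm_mul_le _ _).trans (mul_le_mul (norm_le_pi_norm v i) (norm_le_pi_norm w i)
      (norm_nonneg _) (norm_nonneg _))

end Ultrametric

section ZPow

variable {a : ℝ}

theorem eventually_lt_zpow_atTop (ha : 1 < a) (x : ℝ) : ∀ᶠ R : ℤ in atTop, x < a ^ R := by
  obtain ⟨n, hn⟩ := pow_unbounded_of_one_lt x ha
  filter_upwards [eventually_ge_atTop (n : ℤ)] with R hR
  exact hn.trans_le (by simpa using zpow_le_zpow_right₀ ha.le hR)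

theorem eventually_zpow_neg_lt_atTop (ha : 1 < a) {ε : ℝ} (hε : 0 < ε) :
    ∀ᶠ R : ℤ in atTop, a ^ (-R) < ε := by
  filter_upwards [eventually_lt_zpow_atTop ha ε⁻¹] with R hR
  rwa [zpow_neg, inv_lt_comm₀ (zpow_pos (zero_lt_one.trans ha) R) hε]

variable {X : Type*} [PseudoMetricSpace X]

theorem Bornology.IsBounded.eventually_subset_closedBall_zpow {s : Set X}
    (hs : Bornology.IsBounded s) (ha : 1 < a) (x : X) :
    ∀ᶠ R : ℤ in atTop, s ⊆ closedBall x (a ^ R) := by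
  obtain ⟨r, hr⟩ := hs.subset_closedBall x
  filter_upwards [eventually_lt_zpow_atTop ha r] with R hR
  exact hr.trans (closedBall_subset_closedBall hR.le)

theorem IsClosed.eventually_zpow_neg_lt_dist {s : Set X} (hs : IsClosed s) {x : X} (hx : x ∉ s)
    (ha : 1 < a) : ∀ᶠ R : ℤ in atTop, ∀ y ∈ s, a ^ (-R) < dist y x := by
  obtain ⟨ε, hε, hball⟩ := isOpen_iff.1 hs.isOpen_compl x hx
  filter_upwards [eventually_zpow_neg_lt_atTop ha hε] with R hR y hy
  exact hR.trans_le (not_lt.1 fun h => hball (mem_ball.2 h) hy)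

theorem IsLocallyConstant.exists_zpow_forall_norm_le_add_eq {E F : Type*}
    [SeminormedAddCommGroup E] [Zero F] {f : E → F} (hf : IsLocallyConstant f)
    (hcs : HasCompactSupport f) (ha : 1 < a) :
    ∃ N : ℤ, ∀ x v, ‖v‖ ≤ a ^ (-N) → f (x + v) = f x := by
  obtain ⟨δ, hδ, hfδ⟩ := hf.exists_pos_forall_norm_lt_add_eq hcs
  obtain ⟨N, hN⟩ := (eventually_zpow_neg_lt_atTop ha hδ).exists
  exact ⟨N, fun x v hv => hfδ x v (hv.trans_lt hN)⟩

end ZPow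

theorem HasCompactSupport.comp_linearMap_add {𝕜 E F G : Type*} [NontriviallyNormedField 𝕜]
    [CompleteSpace 𝕜] [AddCommGroup E] [Module 𝕜 E] [TopologicalSpace E] [IsTopologicalAddGroup E]
    [ContinuousSMul 𝕜 E] [T2Space E] [FiniteDimensional 𝕜 E] [AddCommGroup F] [Module 𝕜 F]
    [TopologicalSpace F] [IsTopologicalAddGroup F] [ContinuousSMul 𝕜 F] [T2Space F] [Zero G]
    {f : F → G} (hf : HasCompactSupport f) {B : E →ₗ[𝕜] F} (hB : Injective B) (z : F) :
    HasCompactSupport fun y => f (B y + z) :=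
  hf.comp_isClosedEmbedding ((Homeomorph.addRight z).isClosedEmbedding.comp
    (LinearMap.isClosedEmbedding_of_injective (LinearMap.ker_eq_bot.2 hB)))

theorem Matrix.neg_dotProduct_add_mulVec_add_dotProduct {R m k : Type*} [CommRing R] [Fintype m]
    [Fintype k] (A : Matrix m k R) (y η : k → R) (z ξ : m → R) :
    -(y ⬝ᵥ η) + (A *ᵥ y + z) ⬝ᵥ ξ = (Aᵀ *ᵥ ξ - η) ⬝ᵥ y + z ⬝ᵥ ξ := by
  rw [add_dotProduct, sub_dotProduct, dotProduct_comm (A *ᵥ y), dotProduct_comm _ y,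
    dotProduct_comm η, ← Matrix.dotProduct_transpose_mulVec]
  ring

theorem LinearMap.toMatrix'_transpose_mulVec {R m k : Type*} [CommSemiring R] [Fintype m]
    [Fintype k] [DecidableEq k] (B : (k → R) →ₗ[R] m → R) (ξ : m → R) :
    (LinearMap.toMatrix' B)ᵀ *ᵥ ξ = fun i => ∑ j, B (Pi.single i 1) j * ξ j := by
  ext i
  simp [Matrix.mulVec, dotProduct, LinearMap.toMatrix'_apply]

theorem setIntegral_addChar_eq_zero {G : Type*} [AddGroup G] [MeasurableSpace G] [MeasurableAdd G]
    {μ : Measure G} [μ.IsAddRightInvariant] {S : AddSubgroup G}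
    (hS : MeasurableSet (S : Set G)) (ψ : AddChar G Circle) {s : G} (hs : s ∈ S) (hψ : ψ s ≠ 1) :
    ∫ x in S, (ψ x : ℂ) ∂μ = 0 := by
  set F := (S : Set G).indicator fun x => (ψ x : ℂ)
  have shift : ∀ x, F (x + s) = ψ s * F x := by
    intro x
    by_cases hx : x ∈ S
    · simp [F, hx, S.add_mem hx hs, AddChar.map_add_eq_mul, mul_comm]
    · simp [F, hx, (S.add_mem_cancel_right hs).not.mpr hx]
  have invariant : ∫ x, F x ∂μ = ψ s * ∫ x, F x ∂μ := by
    conv_lhs => rw [← integral_add_right_eq_self F s]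
    simp_rw [shift, integral_const_mul]
  rw [← integral_indicator hS]
  have : ((ψ s : ℂ) - 1) * ∫ x, F x ∂μ = 0 := by rw [sub_mul, one_mul, ← invariant, sub_self]
  exact (mul_eq_zero.1 this).resolve_left (sub_ne_zero.2 (mt Circle.coe_eq_one.1 hψ))

theorem integral_integral_swap_of_isCompact {X Y E : Type*} [TopologicalSpace X] [T2Space X]
    [SecondCountableTopology X] [MeasurableSpace X] [OpensMeasurableSpace X] [TopologicalSpace Y]
    [T2Space Y] [MeasurableSpace Y] [OpensMeasurableSpace Y] [NormedAddCommGroup E]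
    [NormedSpace ℝ E] {μ : Measure X} {ν : Measure Y} [SFinite μ] [SFinite ν]
    [IsFiniteMeasureOnCompacts μ] [IsFiniteMeasureOnCompacts ν] {s : Set X} {t : Set Y}
    (hs : IsCompact s) (ht : IsCompact t) {F : X → Y → E} (hF : Continuous (uncurry F)) :
    ∫ x in s, ∫ y in t, F x y ∂ν ∂μ = ∫ y in t, ∫ x in s, F x y ∂μ ∂ν := by
  apply integral_integral_swap
  rw [Measure.prod_restrict]
  exact hF.continuousOn.integrableOn_compact (hs.prod ht)

namespace AddChar

variable {K : Type*} [SeminormedRing K] [IsUltrametricDist K] {e : AddChar K Circle}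

theorem isLocallyConstant_coe_of_norm_le_one (he : ∀ x : K, ‖x‖ ≤ 1 → e x = 1) :
    IsLocallyConstant fun x => (e x : ℂ) :=
  IsUltrametricDist.isLocallyConstant_of_forall_norm_le_add_eq one_pos fun x v hv => by
    rw [map_add_eq_mul, he v hv, mul_one]

theorem map_dotProduct_eq_one {ι : Type*} [Fintype ι] (he : ∀ x : K, ‖x‖ ≤ 1 → e x = 1)
    {ρ : ℝ} {v w : ι → K} (hv : ‖v‖ ≤ ρ) (hw : ‖w‖ ≤ ρ⁻¹) : e (v ⬝ᵥ w) = 1 :=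
  he _ <| (IsUltrametricDist.norm_dotProduct_le v w).trans <|
    (mul_le_mul hv hw (norm_nonneg _) ((norm_nonneg _).trans hv)).trans mul_inv_le_one

end AddChar

namespace Padic

variable {p : ℕ} [Fact p.Prime] {d : ℕ} {e : AddChar ℚ_[p] Circle}

theorem exists_mem_closedBall_addChar_dotProduct_ne_one (he : ∃ x : ℚ_[p], ‖x‖ ≤ p ∧ e x ≠ 1)
    {c : ℤ} {w : Fin d → ℚ_[p]} (hw : (p : ℝ) ^ (-c) < ‖w‖) :
    ∃ s ∈ closedBall (0 : Fin d → ℚ_[p]) ((p : ℝ) ^ c), e (w ⬝ᵥ s) ≠ 1 := by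
  classical
  have hp : (0 : ℝ) < p := Nat.cast_pos.2 (NeZero.pos p)
  obtain ⟨x₀, hx₀, hex₀⟩ := he
  obtain ⟨i, hi⟩ : ∃ i, (p : ℝ) ^ (-c) < ‖w i‖ := by
    by_contra! h
    exact hw.not_ge ((pi_norm_le_iff_of_nonneg (zpow_pos hp _).le).2 h)
  -- the norm is discrete: `‖w i‖ > p ^ (-c)` forces `‖w i‖ ≥ p ^ (-c + 1)`
  have hwi : (p : ℝ) ^ (-c + 1) ≤ ‖w i‖ :=
    not_lt.1 fun h => hi.not_ge ((norm_le_pow_iff_norm_lt_pow_add_one _ _).2 h)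
  have hwi_pos : 0 < ‖w i‖ := (zpow_pos hp _).trans_le hwi
  refine ⟨Pi.single i (x₀ / w i), ?_, ?_⟩
  · rw [mem_closedBall_zero_iff, Pi.norm_single, norm_div, div_le_iff₀ hwi_pos]
    calc ‖x₀‖ ≤ p := hx₀
      _ = (p : ℝ) ^ c * (p : ℝ) ^ (-c + 1) := by rw [← zpow_add₀ hp.ne']; simp
      _ ≤ (p : ℝ) ^ c * ‖w i‖ := by gcongr
  · rwa [dotProduct_single, mul_div_cancel₀ _ (norm_pos_iff.1 hwi_pos)]

variable [MeasurableSpace ℚ_[p]] [BorelSpace ℚ_[p]]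

theorem setIntegral_closedBall_addChar_dotProduct (μ : Measure (Fin d → ℚ_[p]))
    [μ.IsAddRightInvariant] (he1 : ∀ x : ℚ_[p], ‖x‖ ≤ 1 → e x = 1)
    (he2 : ∃ x : ℚ_[p], ‖x‖ ≤ p ∧ e x ≠ 1) (c : ℤ) (w : Fin d → ℚ_[p]) :
    ∫ x in closedBall 0 ((p : ℝ) ^ c), (e (w ⬝ᵥ x) : ℂ) ∂μ =
      if ‖w‖ ≤ (p : ℝ) ^ (-c) then (μ.real (closedBall 0 ((p : ℝ) ^ c)) : ℂ) else 0 := by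
  split_ifs with hw
  · rw [setIntegral_congr_fun measurableSet_closedBall (g := fun _ => (1 : ℂ)), setIntegral_const,
      Complex.real_smul, mul_one]
    intro x hx
    dsimp only
    rw [AddChar.map_dotProduct_eq_one he1 (ρ := ((p : ℝ) ^ c)⁻¹) (by rwa [← zpow_neg])
      (by rwa [inv_inv, ← mem_closedBall_zero_iff]), Circle.coe_one]
  · obtain ⟨s, hs, hes⟩ := exists_mem_closedBall_addChar_dotProduct_ne_one he2 (not_le.1 hw)
    exact setIntegral_addChar_eq_zero
      (S := (IsUltrametricDist.closedBall_openAddSubgroup _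
        (zpow_pos (Nat.cast_pos.2 (NeZero.pos p)) c)).toAddSubgroup)
      measurableSet_closedBall (e.compAddMonoidHom (AddMonoidHom.mk' (w ⬝ᵥ ·) (dotProduct_add w)))
      hs hes

end Padic

section FourierTransform

variable {p : ℕ} [Fact p.Prime] {d : ℕ} [MeasurableSpace ℚ_[p]] {e : AddChar ℚ_[p] Circle}
  {f : (Fin d → ℚ_[p]) → ℂ}

theorem padicFT_apply (μ : Measure (Fin d → ℚ_[p])) (ξ : Fin d → ℚ_[p]) :
    padicFT μ e f ξ = ∫ x, (e (-(x ⬝ᵥ ξ)) : ℂ) * f x ∂μ :=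
  rfl

theorem padicFT_eq_setIntegral_of_support_subset (μ : Measure (Fin d → ℚ_[p]))
    {s : Set (Fin d → ℚ_[p])} (hs : support f ⊆ s) (ξ : Fin d → ℚ_[p]) :
    padicFT μ e f ξ = ∫ x in s, (e (-(x ⬝ᵥ ξ)) : ℂ) * f x ∂μ :=
  (setIntegral_eq_integral_of_forall_compl_eq_zero fun x hx => by
    rw [notMem_support.1 fun h => hx (hs h), mul_zero]).symm

theorem padicFT_add_eq_of_support_subset (μ : Measure (Fin d → ℚ_[p]))
    (he1 : ∀ x : ℚ_[p], ‖x‖ ≤ 1 → e x = 1) {r : ℤ}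
    (hr : support f ⊆ closedBall 0 ((p : ℝ) ^ r)) (ξ : Fin d → ℚ_[p]) {δ : Fin d → ℚ_[p]}
    (hδ : ‖δ‖ ≤ (p : ℝ) ^ (-r)) : padicFT μ e f (ξ + δ) = padicFT μ e f ξ := by
  rw [padicFT_apply, padicFT_apply]
  refine integral_congr_ae (Eventually.of_forall fun x => ?_)
  by_cases hx : f x = 0
  · simp [hx]
  have hxδ : e (-(x ⬝ᵥ δ)) = 1 := by
    rw [← neg_dotProduct]
    exact AddChar.map_dotProduct_eq_one he1 (by simpa using hr hx) (by rwa [← zpow_neg])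
  dsimp only
  rw [dotProduct_add, neg_add, AddChar.map_add_eq_mul, Circle.coe_mul, hxδ, Circle.coe_one, mul_one]

theorem isLocallyConstant_padicFT (μ : Measure (Fin d → ℚ_[p]))
    (he1 : ∀ x : ℚ_[p], ‖x‖ ≤ 1 → e x = 1) {r : ℤ}
    (hr : support f ⊆ closedBall 0 ((p : ℝ) ^ r)) : IsLocallyConstant (padicFT μ e f) :=
  IsUltrametricDist.isLocallyConstant_of_forall_norm_le_add_eq
    (zpow_pos (Nat.cast_pos.2 (NeZero.pos p)) (-r))
    fun ξ _ hδ => padicFT_add_eq_of_support_subset μ he1 hr ξ hδ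

variable [BorelSpace ℚ_[p]]

theorem setIntegral_closedBall_addChar_mul_padicFT (μ : Measure (Fin d → ℚ_[p]))
    [μ.IsAddHaarMeasure] (he1 : ∀ x : ℚ_[p], ‖x‖ ≤ 1 → e x = 1)
    (he2 : ∃ x : ℚ_[p], ‖x‖ ≤ p ∧ e x ≠ 1) (hf : Continuous f) {r N : ℤ}
    (hr : support f ⊆ closedBall 0 ((p : ℝ) ^ r))
    (hN : ∀ x v, ‖v‖ ≤ (p : ℝ) ^ (-N) → f (x + v) = f x) (x : Fin d → ℚ_[p]) :
    ∫ ξ in closedBall 0 ((p : ℝ) ^ N), (e (x ⬝ᵥ ξ) : ℂ) * padicFT μ e f ξ ∂μ =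
      ((μ.real (closedBall 0 ((p : ℝ) ^ N)) * μ.real (closedBall 0 ((p : ℝ) ^ (-N))) : ℝ) : ℂ) *
        f x := by
  have he := (AddChar.isLocallyConstant_coe_of_norm_le_one he1).continuous
  set c : ℂ := (μ.real (closedBall 0 ((p : ℝ) ^ N)) : ℂ)
  calc ∫ ξ in closedBall 0 ((p : ℝ) ^ N), (e (x ⬝ᵥ ξ) : ℂ) * padicFT μ e f ξ ∂μ
      = ∫ ξ in closedBall 0 ((p : ℝ) ^ N), ∫ u in closedBall 0 ((p : ℝ) ^ r),
          (e ((x - u) ⬝ᵥ ξ) : ℂ) * f u ∂μ ∂μ := by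
        refine setIntegral_congr_fun measurableSet_closedBall fun ξ _ => ?_
        rw [padicFT_eq_setIntegral_of_support_subset μ hr, ← integral_const_mul]
        refine integral_congr_ae (Eventually.of_forall fun u => ?_)
        dsimp only
        rw [sub_dotProduct, sub_eq_add_neg, AddChar.map_add_eq_mul, Circle.coe_mul, mul_assoc]
    _ = ∫ u in closedBall 0 ((p : ℝ) ^ r), ∫ ξ in closedBall 0 ((p : ℝ) ^ N),
          (e ((x - u) ⬝ᵥ ξ) : ℂ) * f u ∂μ ∂μ :=
        integral_integral_swap_of_isCompact (isCompact_closedBall _ _) (isCompact_closedBall _ _)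
          ((he.comp (by fun_prop)).mul (hf.comp continuous_snd))
    _ = ∫ u, (closedBall x ((p : ℝ) ^ (-N))).indicator (fun u => c * f u) u ∂μ := by
        rw [← setIntegral_eq_integral_of_forall_compl_eq_zero (μ := μ)
          (s := closedBall 0 ((p : ℝ) ^ r))]
        · refine setIntegral_congr_fun measurableSet_closedBall fun u _ => ?_
          rw [integral_mul_const, Padic.setIntegral_closedBall_addChar_dotProduct μ he1 he2]
          by_cases h : ‖x - u‖ ≤ (p : ℝ) ^ (-N)
          · rw [if_pos h, Set.indicator_of_mem (mem_closedBall'.2 (by rwa [dist_eq_norm]))]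
          · rw [if_neg h, Set.indicator_of_notMem (by rwa [mem_closedBall', dist_eq_norm]),
              zero_mul]
        · intro u hu
          simp [notMem_support.1 fun h => hu (hr h)]
    _ = ∫ u in closedBall x ((p : ℝ) ^ (-N)), c * f x ∂μ := by
        rw [integral_indicator measurableSet_closedBall]
        refine setIntegral_congr_fun measurableSet_closedBall fun u hu => ?_
        simpa using congrArg (c * ·) (hN x (u - x) (by rwa [← dist_eq_norm]))
    _ = _ := by
        rw [setIntegral_const, Measure.addHaar_real_closedBall_center, Complex.real_smul]
        push_cast
        ring

end FourierTransform

section Slicing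

variable {p : ℕ} [Fact p.Prime] {n k : ℕ} [MeasurableSpace ℚ_[p]] [BorelSpace ℚ_[p]]
  {e : AddChar ℚ_[p] Circle}

theorem padicFT_comp_mulVec_add_eq_zero (μn : Measure (Fin n → ℚ_[p])) [μn.IsAddHaarMeasure]
    (μk : Measure (Fin k → ℚ_[p])) [μk.IsAddHaarMeasure]
    (he1 : ∀ x : ℚ_[p], ‖x‖ ≤ 1 → e x = 1) (he2 : ∃ x : ℚ_[p], ‖x‖ ≤ p ∧ e x ≠ 1)
    {f : (Fin n → ℚ_[p]) → ℂ} (hf : Continuous f) {r N R : ℤ}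
    (hr : support f ⊆ closedBall 0 ((p : ℝ) ^ r))
    (hN : ∀ x v, ‖v‖ ≤ (p : ℝ) ^ (-N) → f (x + v) = f x)
    (A : Matrix (Fin n) (Fin k) ℚ_[p]) (z : Fin n → ℚ_[p])
    (hR : support (fun y => f (A *ᵥ y + z)) ⊆ closedBall 0 ((p : ℝ) ^ R)) (η : Fin k → ℚ_[p])
    (hfar : ∀ ξ ∈ closedBall 0 ((p : ℝ) ^ N), padicFT μn e f ξ ≠ 0 →
      (p : ℝ) ^ (-R) < ‖Aᵀ *ᵥ ξ - η‖) :
    padicFT μk e (fun y => f (A *ᵥ y + z)) η = 0 := by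
  have he := (AddChar.isLocallyConstant_coe_of_norm_le_one he1).continuous
  have hfhat := (isLocallyConstant_padicFT μn he1 hr).continuous
  set fhat := padicFT μn e f
  set c : ℂ := ((μn.real (closedBall 0 ((p : ℝ) ^ N)) *
    μn.real (closedBall 0 ((p : ℝ) ^ (-N))) : ℝ) : ℂ)
  have hc : c ≠ 0 := by
    have hball : ∀ M : ℤ, 0 < μn.real (closedBall (0 : Fin n → ℚ_[p]) ((p : ℝ) ^ M)) := fun M =>
      ENNReal.toReal_pos
        (measure_closedBall_pos μn 0 (zpow_pos (Nat.cast_pos.2 (NeZero.pos p)) M)).ne'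
        measure_closedBall_lt_top.ne
    exact Complex.ofReal_ne_zero.2 (mul_pos (hball N) (hball (-N))).ne'
  refine (mul_eq_zero.1 ?_).resolve_left hc
  calc c * padicFT μk e (fun y => f (A *ᵥ y + z)) η
      = ∫ y in closedBall 0 ((p : ℝ) ^ R), ∫ ξ in closedBall 0 ((p : ℝ) ^ N),
          (e (-(y ⬝ᵥ η)) : ℂ) * ((e ((A *ᵥ y + z) ⬝ᵥ ξ) : ℂ) * fhat ξ) ∂μn ∂μk := by
        rw [padicFT_eq_setIntegral_of_support_subset μk hR, ← integral_const_mul]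
        refine setIntegral_congr_fun measurableSet_closedBall fun y _ => ?_
        rw [integral_const_mul, setIntegral_closedBall_addChar_mul_padicFT μn he1 he2 hf hr hN]
        ring
    _ = ∫ ξ in closedBall 0 ((p : ℝ) ^ N), ∫ y in closedBall 0 ((p : ℝ) ^ R),
          (e (-(y ⬝ᵥ η)) : ℂ) * ((e ((A *ᵥ y + z) ⬝ᵥ ξ) : ℂ) * fhat ξ) ∂μk ∂μn :=
        integral_integral_swap_of_isCompact (isCompact_closedBall _ _) (isCompact_closedBall _ _)
          ((he.comp (by fun_prop)).mul ((he.comp (by fun_prop)).mul (hfhat.comp continuous_snd)))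
    _ = ∫ ξ in closedBall 0 ((p : ℝ) ^ N),
          (∫ y in closedBall 0 ((p : ℝ) ^ R), (e ((Aᵀ *ᵥ ξ - η) ⬝ᵥ y) : ℂ) ∂μk) *
            ((e (z ⬝ᵥ ξ) : ℂ) * fhat ξ) ∂μn := by
        refine setIntegral_congr_fun measurableSet_closedBall fun ξ _ => ?_
        rw [← integral_mul_const]
        refine integral_congr_ae (Eventually.of_forall fun y => ?_)
        dsimp only
        rw [← mul_assoc, ← Circle.coe_mul, ← AddChar.map_add_eq_mul,
          Matrix.neg_dotProduct_add_mulVec_add_dotProduct, AddChar.map_add_eq_mul, Circle.coe_mul,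
          mul_assoc]
    _ = 0 := by
        refine setIntegral_eq_zero_of_forall_eq_zero fun ξ hξ => ?_
        by_cases hξ0 : fhat ξ = 0
        · rw [hξ0, mul_zero, mul_zero]
        · rw [Padic.setIntegral_closedBall_addChar_dotProduct μk he1 he2,
            if_neg (not_le.2 (hfar ξ hξ hξ0)), zero_mul]

end Slicing

theorem padic_fourier_slicing_general (p n k : ℕ) [Fact p.Prime]
    [MeasurableSpace ℚ_[p]] [BorelSpace ℚ_[p]]
    (μn : Measure (Fin n → ℚ_[p])) [μn.IsAddHaarMeasure]
    (μk : Measure (Fin k → ℚ_[p])) [μk.IsAddHaarMeasure]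
    (e : AddChar ℚ_[p] Circle) (he1 : ∀ x : ℚ_[p], ‖x‖ ≤ 1 → e x = 1)
    (he2 : ∃ x : ℚ_[p], ‖x‖ ≤ (p : ℝ) ∧ e x ≠ 1)
    (f : (Fin n → ℚ_[p]) → ℂ) (hlc : IsLocallyConstant f) (hcs : HasCompactSupport f)
    (Ω : Set (Fin n → ℚ_[p])) (hΩ : Function.support (padicFT μn e f) ⊆ Ω)
    (B : (Fin k → ℚ_[p]) →ₗ[ℚ_[p]] (Fin n → ℚ_[p])) (hB : Function.Injective B)
    (z : Fin n → ℚ_[p]) :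
    Function.support (padicFT μk e (fun y => f (B y + z))) ⊆
      (fun ξ => fun i : Fin k => ∑ j, B (Pi.single i 1) j * ξ j) '' Ω := by
  have hp : (1 : ℝ) < p := Nat.one_lt_cast.2 Fact.out
  set A := LinearMap.toMatrix' B
  have hA : ∀ y, B y = A *ᵥ y := fun y => (LinearMap.toMatrix'_mulVec B y).symm
  have hslice : HasCompactSupport fun y => f (A *ᵥ y + z) := by
    simpa only [hA] using hcs.comp_linearMap_add hB z
  obtain ⟨N, hN⟩ := hlc.exists_zpow_forall_norm_le_add_eq hcs hp
  obtain ⟨r, hr⟩ := (hcs.isBounded.eventually_subset_closedBall_zpow hp 0).exists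
  replace hr := hr.trans' (subset_tsupport f)
  have hK : IsClosed ((Aᵀ *ᵥ ·) '' (closedBall 0 ((p : ℝ) ^ N) ∩ support (padicFT μn e f))) :=
    (((isCompact_closedBall _ _).inter_right
      ((isLocallyConstant_padicFT μn he1 hr).isOpen_fiber 0).isClosed_compl).image
        (by fun_prop)).isClosed
  simp only [← B.toMatrix'_transpose_mulVec]
  simp only [hA]
  intro η hη
  by_contra hηΩ
  obtain ⟨R, hR, hfar⟩ := ((hslice.isBounded.eventually_subset_closedBall_zpow hp 0).and
    (hK.eventually_zpow_neg_lt_dist (x := η)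
      (fun h => hηΩ (Set.image_mono (Set.inter_subset_right.trans hΩ) h)) hp)).exists
  exact hη (padicFT_comp_mulVec_add_eq_zero μn μk he1 he2 hlc.continuous hr hN A z
    (hR.trans' (subset_tsupport _)) η
    fun ξ hξ hξ0 => by simpa [dist_eq_norm] using hfar _ ⟨ξ, ⟨hξ, hξ0⟩, rfl⟩)

/-- p-adic Fourier slicing.  If a Schwartz–Bruhat `f` on `ℚ_p^n` has Fourier
support in `Ω`, `B : ℚ_p^k → ℚ_p^n` is an injective linear map (a linear isomorphism onto the
`k`-dimensional subspace `H = range B`), and `z ∈ ℚ_p^n`, then the Fourier transform on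
`ℚ_p^k` of `f^z(y) = f(B y + z)` is supported in `Bᵀ[Ω]`, where
`(Bᵀ ξ) i = ∑ j, B(e_i)_j ξ_j`. -/
theorem padic_fourier_slicing (p n k : ℕ) [Fact p.Prime]
    [MeasurableSpace ℚ_[p]] [BorelSpace ℚ_[p]]
    (μn : Measure (Fin n → ℚ_[p])) [μn.IsAddHaarMeasure]
    (hμn : μn {x : Fin n → ℚ_[p] | ∀ i, ‖x i‖ ≤ 1} = 1)
    (μk : Measure (Fin k → ℚ_[p])) [μk.IsAddHaarMeasure]
    (hμk : μk {x : Fin k → ℚ_[p] | ∀ i, ‖x i‖ ≤ 1} = 1)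
    (e : AddChar ℚ_[p] Circle) (he1 : ∀ x : ℚ_[p], ‖x‖ ≤ 1 → e x = 1)
    (he2 : ∃ x : ℚ_[p], ‖x‖ ≤ (p : ℝ) ∧ e x ≠ 1)
    (f : (Fin n → ℚ_[p]) → ℂ) (hlc : IsLocallyConstant f) (hcs : HasCompactSupport f)
    (Ω : Set (Fin n → ℚ_[p])) (hΩ : Function.support (padicFT μn e f) ⊆ Ω)
    (B : (Fin k → ℚ_[p]) →ₗ[ℚ_[p]] (Fin n → ℚ_[p])) (hB : Function.Injective B)
    (z : Fin n → ℚ_[p]) :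
    Function.support (padicFT μk e (fun y => f (B y + z))) ⊆
      (fun ξ => fun i : Fin k => ∑ j, B (Pi.single i 1) j * ξ j) '' Ω :=
  padic_fourier_slicing_general p n k μn μk e he1 he2 f hlc hcs Ω hΩ B hB z
end
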